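/- arXiv:0706.1300 — 2 statements merged into one kernel-verified Lean document; each statement's English description precedes it below -/
import Mathlib

section
/- Let u(t,x) = x·Φ(g(t,x)) − K e^{−rt} Φ(h(t,x)) where g(t,x) = (ln(x/K) + (r + σ²/2)t)/(σ√t) and h(t,x) = g(t,x) − σ√t, with K, σ, r > 0. Then for all x > 0 and t > 0, u satisfies the Black-Scholes PDE: ∂u/∂t = (σ²/2) x² ∂²u/∂x² + r x ∂u/∂x − r u. -/
open Real

/-- The standard normal cumulative distribution function. -/
noncomputable def stdNormalCDF (x : ℝ) : ℝ :=
  (Real.sqrt (2 * Real.pi))⁻¹ * ∫ y in Set.Iio x, Real.exp (-y ^ 2 / 2)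

/-!
The spot derivative of the call price is `Φ(d₁)`: differentiating `Φ(d₁)` and `Φ(d₂)` produces
`x φ(d₁) ∂ₓd₁ - K e^{-rt} φ(d₂) ∂ₓd₂`, which vanishes because `∂ₓd₁ = ∂ₓd₂` and
`K e^{-rt} φ(d₂) = x φ(d₁)`. The same identity collapses the time derivative to
`x φ(d₁) σ / (2√t) + r K e^{-rt} Φ(d₂)`, and the gamma is `φ(d₁) / (x σ √t)`; substituting these
three Greeks into the PDE leaves an identity.
-/

theorem hasDerivAt_integral_Iio {f : ℝ → ℝ} (hf : Continuous f) (hfi : MeasureTheory.Integrable f)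
    (x : ℝ) : HasDerivAt (fun z => ∫ y in Set.Iio z, f y) (f x) x := by
  have hsplit : (fun z => ∫ y in Set.Iio z, f y) =
      fun z => (∫ y in Set.Iic 0, f y) + ∫ y in (0 : ℝ)..z, f y := by
    funext z
    rw [← MeasureTheory.integral_Iic_eq_integral_Iio,
      ← intervalIntegral.integral_Iic_sub_Iic hfi.integrableOn hfi.integrableOn]
    ring
  rw [hsplit]
  exact (intervalIntegral.integral_hasDerivAt_right hfi.intervalIntegrable
    (hf.stronglyMeasurableAtFilter _ _) hf.continuousAt).const_add _

noncomputable def stdNormalPDF (x : ℝ) : ℝ :=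
  (√(2 * π))⁻¹ * exp (-x ^ 2 / 2)

theorem hasDerivAt_stdNormalCDF (x : ℝ) : HasDerivAt stdNormalCDF (stdNormalPDF x) x := by
  have hi : MeasureTheory.Integrable fun y : ℝ => exp (-y ^ 2 / 2) := by
    convert integrable_exp_neg_mul_sq (show (0 : ℝ) < 1 / 2 by norm_num) using 3 with y
    ring
  exact (hasDerivAt_integral_Iio (by fun_prop) hi x).const_mul _

theorem stdNormalPDF_sub (a b : ℝ) :
    stdNormalPDF (a - b) = exp (a * b - b ^ 2 / 2) * stdNormalPDF a := by
  rw [stdNormalPDF, stdNormalPDF, mul_left_comm, ← exp_add]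
  ring_nf

namespace BlackScholes

variable {K σ r t x : ℝ}

noncomputable def d₁ (K σ r t x : ℝ) : ℝ :=
  (log (x / K) + (r + σ ^ 2 / 2) * t) / (σ * √t)

noncomputable def d₂ (K σ r t x : ℝ) : ℝ :=
  d₁ K σ r t x - σ * √t

noncomputable def callPrice (K σ r t x : ℝ) : ℝ :=
  x * stdNormalCDF (d₁ K σ r t x) - K * exp (-r * t) * stdNormalCDF (d₂ K σ r t x)

theorem d₁_mul (hσ : σ ≠ 0) (ht : 0 < t) :
    d₁ K σ r t x * (σ * √t) = log (x / K) + (r + σ ^ 2 / 2) * t := by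
  have : σ * √t ≠ 0 := by positivity
  rw [d₁, div_mul_cancel₀ _ this]

theorem discount_mul_stdNormalPDF_d₂ (hK : 0 < K) (hσ : σ ≠ 0) (ht : 0 < t) (hx : 0 < x) :
    K * exp (-r * t) * stdNormalPDF (d₂ K σ r t x) = x * stdNormalPDF (d₁ K σ r t x) := by
  have hexponent : d₁ K σ r t x * (σ * √t) - (σ * √t) ^ 2 / 2 = log (x / K) + r * t := by
    rw [d₁_mul hσ ht, mul_pow, sq_sqrt ht.le]
    ring
  have hdiscount : exp (-r * t) * exp (r * t) = 1 := by rw [← exp_add]; simp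
  have hstrike : K * (x / K) = x := mul_div_cancel₀ x hK.ne'
  rw [d₂, stdNormalPDF_sub, hexponent, exp_add, exp_log (by positivity)]
  linear_combination exp (-r * t) * exp (r * t) * stdNormalPDF (d₁ K σ r t x) * hstrike
    + x * stdNormalPDF (d₁ K σ r t x) * hdiscount

theorem hasDerivAt_d₁_spot (hK : K ≠ 0) (hx : x ≠ 0) :
    HasDerivAt (d₁ K σ r t) (1 / (x * (σ * √t))) x := by
  have hlog : HasDerivAt (fun y => log (y / K)) ((x / K)⁻¹ * (1 / K)) x :=
    (hasDerivAt_log (by positivity)).comp x ((hasDerivAt_id x).div_const K)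
  refine ((hlog.add_const ((r + σ ^ 2 / 2) * t)).div_const (σ * √t)).congr_deriv ?_
  field_simp

theorem hasDerivAt_callPrice_spot (hK : 0 < K) (hσ : σ ≠ 0) (ht : 0 < t) (hx : 0 < x) :
    HasDerivAt (callPrice K σ r t) (stdNormalCDF (d₁ K σ r t x)) x := by
  have hd₁ := hasDerivAt_d₁_spot (σ := σ) (r := r) (t := t) hK.ne' hx.ne'
  have hd₂ : HasDerivAt (d₂ K σ r t) (1 / (x * (σ * √t))) x := hd₁.sub_const _
  have hcall := ((hasDerivAt_id x).mul ((hasDerivAt_stdNormalCDF _).comp x hd₁)).sub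
    (((hasDerivAt_stdNormalCDF _).comp x hd₂).const_mul (K * exp (-r * t)))
  refine hcall.congr_deriv ?_
  simp only [id, Function.comp_def]
  linear_combination (-(1 / (x * (σ * √t)))) * discount_mul_stdNormalPDF_d₂ hK hσ ht hx

theorem deriv_deriv_callPrice_spot (hK : 0 < K) (hσ : σ ≠ 0) (ht : 0 < t) (hx : 0 < x) :
    deriv (deriv (callPrice K σ r t)) x = stdNormalPDF (d₁ K σ r t x) / (x * (σ * √t)) := by
  have hdelta : deriv (callPrice K σ r t) =ᶠ[nhds x] fun y => stdNormalCDF (d₁ K σ r t y) := by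
    filter_upwards [isOpen_Ioi.mem_nhds hx] with y hy
    exact (hasDerivAt_callPrice_spot hK hσ ht hy).deriv
  have hgamma : HasDerivAt (fun y => stdNormalCDF (d₁ K σ r t y))
      (stdNormalPDF (d₁ K σ r t x) * (1 / (x * (σ * √t)))) x :=
    (hasDerivAt_stdNormalCDF _).comp x (hasDerivAt_d₁_spot hK.ne' hx.ne')
  rw [hdelta.deriv_eq, hgamma.deriv]
  ring

theorem hasDerivAt_d₁_time (hσ : σ ≠ 0) (ht : 0 < t) :
    HasDerivAt (fun s => d₁ K σ r s x)
      ((r + σ ^ 2 / 2) / (σ * √t) - d₁ K σ r t x / (2 * t)) t := by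
  have hvol : HasDerivAt (fun s => σ * √s) (σ * (1 / (2 * √t))) t :=
    (hasDerivAt_sqrt ht.ne').const_mul σ
  have hquot := (((hasDerivAt_id t).const_mul (r + σ ^ 2 / 2)).const_add (log (x / K))).div
    hvol (by positivity)
  refine hquot.congr_deriv ?_
  have hsqrt : √t ^ 2 = t := sq_sqrt ht.le
  have : √t ≠ 0 := by positivity
  simp only [id, d₁]
  field_simp
  rw [hsqrt]

theorem hasDerivAt_callPrice_time (hK : 0 < K) (hσ : σ ≠ 0) (ht : 0 < t) (hx : 0 < x) :
    HasDerivAt (fun s => callPrice K σ r s x)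
      (x * stdNormalPDF (d₁ K σ r t x) * (σ / (2 * √t))
        + r * K * exp (-r * t) * stdNormalCDF (d₂ K σ r t x)) t := by
  have hd₁ := hasDerivAt_d₁_time (K := K) (r := r) (x := x) hσ ht
  set D := (r + σ ^ 2 / 2) / (σ * √t) - d₁ K σ r t x / (2 * t)
  have hd₂ : HasDerivAt (fun s => d₂ K σ r s x) (D - σ * (1 / (2 * √t))) t :=
    hd₁.sub ((hasDerivAt_sqrt ht.ne').const_mul σ)
  have hdiscount : HasDerivAt (fun s => exp (-r * s)) (exp (-r * t) * (-r * 1)) t :=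
    ((hasDerivAt_id t).const_mul (-r)).exp
  have hcall := (((hasDerivAt_stdNormalCDF _).comp t hd₁).const_mul x).sub
    ((hdiscount.const_mul K).mul ((hasDerivAt_stdNormalCDF _).comp t hd₂))
  refine hcall.congr_deriv ?_
  simp only [Function.comp_def]
  linear_combination (σ * (1 / (2 * √t)) - D) * discount_mul_stdNormalPDF_d₂ hK hσ ht hx

end BlackScholes

open BlackScholes

theorem blackScholes_pde_general (K σ r : ℝ) (hK : 0 < K) (hσ : 0 < σ)
    (g h u : ℝ → ℝ → ℝ)
    (hg : ∀ t x, g t x = (Real.log (x / K) + (r + σ ^ 2 / 2) * t) / (σ * Real.sqrt t))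
    (hh : ∀ t x, h t x = g t x - σ * Real.sqrt t)
    (hu : ∀ t x, u t x = x * stdNormalCDF (g t x)
        - K * Real.exp (-r * t) * stdNormalCDF (h t x)) :
    ∀ x > (0 : ℝ), ∀ t > (0 : ℝ),
      deriv (fun s => u s x) t =
        σ ^ 2 / 2 * x ^ 2 * deriv (fun y => deriv (fun y' => u t y') y) x
          + r * x * deriv (fun y => u t y) x - r * u t x := by
  intro x hx t ht
  obtain rfl : g = d₁ K σ r := funext₂ hg
  obtain rfl : h = d₂ K σ r := funext₂ hh
  obtain rfl : u = callPrice K σ r := funext₂ hu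
  rw [(hasDerivAt_callPrice_time hK hσ.ne' ht hx).deriv, deriv_deriv_callPrice_spot hK hσ.ne' ht hx,
    (hasDerivAt_callPrice_spot hK hσ.ne' ht hx).deriv, callPrice]
  field_simp
  ring

/-- The Black–Scholes solution `u(t,x) = x Φ(g(t,x)) - K e^{-rt} Φ(h(t,x))`
satisfies `∂u/∂t = (σ²/2) x² ∂²u/∂x² + r x ∂u/∂x - r u` for `x > 0`, `t > 0`. -/
theorem blackScholes_pde (K σ r : ℝ) (hK : 0 < K) (hσ : 0 < σ) (hr : 0 < r)
    (g h u : ℝ → ℝ → ℝ)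
    (hg : ∀ t x, g t x = (Real.log (x / K) + (r + σ ^ 2 / 2) * t) / (σ * Real.sqrt t))
    (hh : ∀ t x, h t x = g t x - σ * Real.sqrt t)
    (hu : ∀ t x, u t x = x * stdNormalCDF (g t x)
        - K * Real.exp (-r * t) * stdNormalCDF (h t x)) :
    ∀ x > (0 : ℝ), ∀ t > (0 : ℝ),
      deriv (fun s => u s x) t =
        σ ^ 2 / 2 * x ^ 2 * deriv (fun y => deriv (fun y' => u t y') y) x
          + r * x * deriv (fun y => u t y) x - r * u t x :=
  blackScholes_pde_general K σ r hK hσ g h u hg hh hu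
end

section
/- Let u(t,x) = x·Φ(g(t,x)) − K e^{−rt} Φ(h(t,x)) with g,h as in the Black-Scholes formula. Then for every x > 0, lim_{t→0⁺} u(t,x) = max(x − K, 0). -/
open Real Filter Topology

/-! As `t → 0⁺`, both `g t x` and `h t x` have the form `(a + c t) / (σ √t) = a / (σ √t) + (c / σ) √t`
with `a = log (x / K)`, so they tend to `+∞`, `-∞` or `0` according to the sign of `a`. Hence `Φ (g t x)`
and `Φ (h t x)` converge to a common limit `L ∈ {1, 0, Φ 0}`, and `u t x → (x - K) L = max (x - K) 0`. -/

open MeasureTheory Set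

lemma integrable_exp_neg_sq_div_two : Integrable fun y : ℝ => exp (-y ^ 2 / 2) := by
  simpa [div_eq_inv_mul, mul_comm] using integrable_exp_neg_mul_sq (by norm_num : (0 : ℝ) < 2⁻¹)

lemma integral_exp_neg_sq_div_two : ∫ y : ℝ, exp (-y ^ 2 / 2) = √(2 * π) := by
  simpa [div_eq_inv_mul, mul_comm] using integral_gaussian (2⁻¹ : ℝ)

lemma stdNormalCDF_eq_integral_Iic_add_intervalIntegral (x : ℝ) :
    stdNormalCDF x =
      (√(2 * π))⁻¹ * ((∫ y in Iic 0, exp (-y ^ 2 / 2)) + ∫ y in 0..x, exp (-y ^ 2 / 2)) := by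
  rw [stdNormalCDF, ← integral_Iic_eq_integral_Iio,
    ← intervalIntegral.integral_Iic_sub_Iic integrable_exp_neg_sq_div_two.integrableOn
      integrable_exp_neg_sq_div_two.integrableOn, add_sub_cancel]

lemma continuous_stdNormalCDF : Continuous stdNormalCDF := by
  simp only [funext stdNormalCDF_eq_integral_Iic_add_intervalIntegral]
  exact continuous_const.mul
    (continuous_const.add (integrable_exp_neg_sq_div_two.continuous_primitive 0))

lemma tendsto_stdNormalCDF_atTop : Tendsto stdNormalCDF atTop (𝓝 1) := by
  have h := (intervalIntegral_tendsto_integral_Ioi 0 integrable_exp_neg_sq_div_two.integrableOn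
    tendsto_id).const_add (∫ y in Iic 0, exp (-y ^ 2 / 2))
  rw [intervalIntegral.integral_Iic_add_Ioi integrable_exp_neg_sq_div_two.integrableOn
    integrable_exp_neg_sq_div_two.integrableOn, integral_exp_neg_sq_div_two] at h
  have h' := h.const_mul (√(2 * π))⁻¹
  rw [inv_mul_cancel₀ (by positivity)] at h'
  exact h'.congr fun x => (stdNormalCDF_eq_integral_Iic_add_intervalIntegral x).symm

lemma tendsto_stdNormalCDF_atBot : Tendsto stdNormalCDF atBot (𝓝 0) := by
  have h := (intervalIntegral_tendsto_integral_Iic 0 integrable_exp_neg_sq_div_two.integrableOn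
    tendsto_id).const_sub (∫ y in Iic 0, exp (-y ^ 2 / 2))
  rw [sub_self] at h
  simpa [funext stdNormalCDF_eq_integral_Iic_add_intervalIntegral, intervalIntegral.integral_symm 0,
    ← sub_eq_add_neg] using h.const_mul (√(2 * π))⁻¹

-- Valid for all `σ` and `t`: both sides vanish when `σ = 0` or `t ≤ 0`, as `√t = 0` and `y / 0 = 0`.
lemma div_mul_sqrt_eq (a c σ t : ℝ) : (a + c * t) / (σ * √t) = a * (σ * √t)⁻¹ + c / σ * √t := by
  rcases le_or_gt t 0 with ht | ht
  · simp [sqrt_eq_zero'.2 ht]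
  rcases eq_or_ne σ 0 with rfl | hσ
  · simp
  have hst : √t ≠ 0 := (sqrt_pos.2 ht).ne'
  field_simp
  rw [sq_sqrt ht.le]

lemma div_mul_sqrt_sub_mul_sqrt (a c σ t : ℝ) :
    (a + c * t) / (σ * √t) - σ * √t = (a + (c - σ ^ 2) * t) / (σ * √t) := by
  rcases le_or_gt t 0 with ht | ht
  · simp [sqrt_eq_zero'.2 ht]
  rcases eq_or_ne σ 0 with rfl | hσ
  · simp
  have hst : √t ≠ 0 := (sqrt_pos.2 ht).ne'
  field_simp
  rw [sq_sqrt ht.le]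
  ring

lemma tendsto_mul_sqrt_nhdsGT_zero (c : ℝ) : Tendsto (fun t => c * √t) (𝓝[>] 0) (𝓝 0) :=
  tendsto_nhdsWithin_of_tendsto_nhds <| by
    simpa using (continuous_const.mul continuous_sqrt).tendsto (f := fun t => c * √t) 0

lemma tendsto_inv_mul_sqrt_nhdsGT_zero {σ : ℝ} (hσ : 0 < σ) :
    Tendsto (fun t => (σ * √t)⁻¹) (𝓝[>] 0) atTop :=
  tendsto_inv_nhdsGT_zero.comp <| tendsto_nhdsWithin_iff.2
    ⟨tendsto_mul_sqrt_nhdsGT_zero σ, eventually_nhdsWithin_of_forall fun _ ht =>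
      mul_pos hσ (sqrt_pos.2 ht)⟩

section
variable {a σ : ℝ}

lemma tendsto_div_mul_sqrt_atTop (hσ : 0 < σ) (ha : 0 < a) (c : ℝ) :
    Tendsto (fun t => (a + c * t) / (σ * √t)) (𝓝[>] 0) atTop := by
  simp only [div_mul_sqrt_eq]
  exact ((tendsto_inv_mul_sqrt_nhdsGT_zero hσ).const_mul_atTop ha).atTop_add
    (tendsto_mul_sqrt_nhdsGT_zero _)

lemma tendsto_div_mul_sqrt_atBot (hσ : 0 < σ) (ha : a < 0) (c : ℝ) :
    Tendsto (fun t => (a + c * t) / (σ * √t)) (𝓝[>] 0) atBot := by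
  simp only [div_mul_sqrt_eq]
  exact ((tendsto_inv_mul_sqrt_nhdsGT_zero hσ).const_mul_atTop_of_neg ha).atBot_add
    (tendsto_mul_sqrt_nhdsGT_zero _)

end

lemma tendsto_mul_div_mul_sqrt_zero (c σ : ℝ) :
    Tendsto (fun t => c * t / (σ * √t)) (𝓝[>] 0) (𝓝 0) := by
  refine (tendsto_mul_sqrt_nhdsGT_zero (c / σ)).congr fun t => ?_
  simpa using (div_mul_sqrt_eq 0 c σ t).symm

theorem blackScholes_initial_condition_general (K σ r : ℝ) (hK : 0 < K) (hσ : 0 < σ)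
    (g h u : ℝ → ℝ → ℝ)
    (hg : ∀ t x, g t x = (Real.log (x / K) + (r + σ ^ 2 / 2) * t) / (σ * Real.sqrt t))
    (hh : ∀ t x, h t x = g t x - σ * Real.sqrt t)
    (hu : ∀ t x, u t x = x * stdNormalCDF (g t x)
        - K * Real.exp (-r * t) * stdNormalCDF (h t x)) :
    ∀ x > (0 : ℝ),
      Tendsto (fun t => u t x) (nhdsWithin 0 (Set.Ioi 0)) (nhds (max (x - K) 0)) := by
  intro x hx
  set a := log (x / K)
  have hdiscount : Tendsto (fun t => exp (-r * t)) (𝓝[>] 0) (𝓝 1) :=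
    tendsto_nhdsWithin_of_tendsto_nhds <|
      (by fun_prop : Continuous fun t => exp (-r * t)).tendsto' 0 1 (by simp)
  have hlim : ∀ L, (∀ c, Tendsto (fun t => stdNormalCDF ((a + c * t) / (σ * √t))) (𝓝[>] 0) (𝓝 L))
      → Tendsto (fun t => u t x) (𝓝[>] 0) (𝓝 ((x - K) * L)) := by
    intro L hL
    have := ((hL (r + σ ^ 2 / 2)).const_mul x).sub
      ((hdiscount.const_mul K).mul (hL (r + σ ^ 2 / 2 - σ ^ 2)))
    refine (this.congr fun t => ?_).trans (by rw [mul_one, ← sub_mul])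
    rw [hu, hh, hg, div_mul_sqrt_sub_mul_sqrt]
  rcases lt_trichotomy x K with hxK | rfl | hxK
  · have ha : a < 0 := log_neg (div_pos hx hK) ((div_lt_one hK).2 hxK)
    simpa [max_eq_right (sub_nonpos.2 hxK.le)] using
      hlim 0 fun c => tendsto_stdNormalCDF_atBot.comp (tendsto_div_mul_sqrt_atBot hσ ha c)
  · have ha : a = 0 := by simp [a]
    simpa using hlim (stdNormalCDF 0) fun c => by
      simpa [ha, Function.comp_def] using
        (continuous_stdNormalCDF.tendsto 0).comp (tendsto_mul_div_mul_sqrt_zero c σ)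
  · have ha : 0 < a := log_pos ((one_lt_div hK).2 hxK)
    simpa [max_eq_left (sub_nonneg.2 hxK.le)] using
      hlim 1 fun c => tendsto_stdNormalCDF_atTop.comp (tendsto_div_mul_sqrt_atTop hσ ha c)

/-- The Black–Scholes solution satisfies the terminal condition:
`u(t,x) → max(x - K, 0)` as `t → 0⁺`, for every `x > 0`. -/
theorem blackScholes_initial_condition (K σ r : ℝ) (hK : 0 < K) (hσ : 0 < σ) (hr : 0 < r)
    (g h u : ℝ → ℝ → ℝ)
    (hg : ∀ t x, g t x = (Real.log (x / K) + (r + σ ^ 2 / 2) * t) / (σ * Real.sqrt t))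
    (hh : ∀ t x, h t x = g t x - σ * Real.sqrt t)
    (hu : ∀ t x, u t x = x * stdNormalCDF (g t x)
        - K * Real.exp (-r * t) * stdNormalCDF (h t x)) :
    ∀ x > (0 : ℝ),
      Tendsto (fun t => u t x) (nhdsWithin 0 (Set.Ioi 0)) (nhds (max (x - K) 0)) :=
  blackScholes_initial_condition_general K σ r hK hσ g h u hg hh hu
end
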